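/- arXiv:2410.02403 — 4 statements merged into one kernel-verified Lean document; each statement's English description precedes it below -/
import Mathlib

section
/- Let Σ be a p×p positive definite real matrix partitioned in block form Σ = [[A, b], [bᵀ, c]] where A is (p−1)×(p−1), b ∈ ℝ^{p−1} and c ∈ ℝ, and let Y = [Y₁ y] be an n×p real matrix with Y₁ of size n×(p−1) and y ∈ ℝⁿ its last column. Set τ = c − bᵀ·A⁻¹·b and Z = Y₁·A⁻¹. Then τ > 0 and the loglikelihood decomposes as −log det Σ − (1/n)·tr(Σ⁻¹·Yᵀ·Y) = −log det A − (1/n)·tr(A⁻¹·Y₁ᵀ·Y₁) − log τ − (1/(nτ))·‖y − Z·b‖₂². -/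
open Matrix

section helpers

lemma trace_fromBlocks' {α : Type*} [AddCommMonoid α] {p q : Type*} [Fintype p] [Fintype q]
    (A : Matrix p p α) (B : Matrix p q α) (C : Matrix q p α) (D : Matrix q q α) :
    (Matrix.fromBlocks A B C D).trace = A.trace + D.trace := by
  simp [Matrix.trace, Fintype.sum_sum_type, Matrix.fromBlocks, Matrix.diag]

lemma row_mul_col_entry {k l : Type*} [Fintype k] [Fintype l]
    (u : k → ℝ) (M : Matrix k l ℝ) (v : l → ℝ) :
    ((Matrix.of fun (_ : Fin 1) j => u j) * M * (Matrix.of fun i (_ : Fin 1) => v i)) 0 0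
      = u ⬝ᵥ (M *ᵥ v) := by
  simp only [Matrix.mul_apply, Matrix.of_apply, Matrix.mulVec, dotProduct,
    Finset.sum_mul, Finset.mul_sum]
  rw [Finset.sum_comm]
  exact Finset.sum_congr rfl fun i _ => Finset.sum_congr rfl fun j _ => by ring

end helpers

/-- Loglikelihood decomposition (equation (3)): for positive definite
`Σ = [[A, b], [bᵀ, c]]` and data `Y = [Y₁ y]`, with `τ = c − bᵀA⁻¹b > 0` and
`Z = Y₁A⁻¹`, the Gaussian loglikelihood splits into a marginal and a
conditional (regression) part. -/
theorem stmt2 (n m : ℕ) (hn : 1 ≤ n)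
    (A : Matrix (Fin m) (Fin m) ℝ) (b : Fin m → ℝ) (c : ℝ)
    (Sgm : Matrix (Fin m ⊕ Fin 1) (Fin m ⊕ Fin 1) ℝ)
    (hSgm : Sgm = Matrix.fromBlocks A (Matrix.of fun i (_ : Fin 1) => b i)
      (Matrix.of fun (_ : Fin 1) j => b j) (Matrix.of fun (_ _ : Fin 1) => c))
    (hpd : Sgm.PosDef)
    (Y₁ : Matrix (Fin n) (Fin m) ℝ) (y : Fin n → ℝ)
    (Y : Matrix (Fin n) (Fin m ⊕ Fin 1) ℝ)
    (hY : Y = Matrix.fromCols Y₁ (Matrix.of fun i (_ : Fin 1) => y i))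
    (τ : ℝ) (hτ : τ = c - b ⬝ᵥ (A⁻¹ *ᵥ b))
    (Z : Matrix (Fin n) (Fin m) ℝ) (hZ : Z = Y₁ * A⁻¹) :
    0 < τ ∧
    -Real.log Sgm.det - (1 / (n : ℝ)) * (Sgm⁻¹ * (Yᵀ * Y)).trace
      = -Real.log A.det - (1 / (n : ℝ)) * (A⁻¹ * (Y₁ᵀ * Y₁)).trace
        - Real.log τ - (1 / ((n : ℝ) * τ)) * ∑ i, (y i - (Z *ᵥ b) i) ^ 2 := by
  -- notation for the blocks
  set B : Matrix (Fin m) (Fin 1) ℝ := Matrix.of fun i (_ : Fin 1) => b i with hB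
  set R : Matrix (Fin 1) (Fin m) ℝ := Matrix.of fun (_ : Fin 1) j => b j with hR
  set C1 : Matrix (Fin 1) (Fin 1) ℝ := Matrix.of fun (_ _ : Fin 1) => c with hC1
  set Yc : Matrix (Fin n) (Fin 1) ℝ := Matrix.of fun i (_ : Fin 1) => y i with hYc
  -- A is symmetric
  have hAt : Aᵀ = A := by
    ext i j
    have := congrFun (congrFun hpd.1 (Sum.inl i)) (Sum.inl j)
    simpa [hSgm, Matrix.conjTranspose_apply, Matrix.fromBlocks] using this
  have hAher : A.IsHermitian := by
    rw [Matrix.IsHermitian, Matrix.conjTranspose_eq_transpose_of_trivial, hAt]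
  -- A positive definite
  have hApd : A.PosDef := by
    refine Matrix.PosDef.of_dotProduct_mulVec_pos hAher fun x hx => ?_
    have hv : (Sum.elim x (0 : Fin 1 → ℝ)) ≠ 0 := by
      intro h
      apply hx
      funext i
      exact congrFun h (Sum.inl i)
    have := hpd.dotProduct_mulVec_pos hv
    simpa [hSgm, Matrix.fromBlocks_mulVec, sumElim_dotProduct_sumElim] using this
  have hdetA : 0 < A.det := hApd.det_pos
  haveI : Invertible A := A.invertibleOfIsUnitDet hdetA.ne'.isUnit
  have hAinv : A * A⁻¹ = 1 := Matrix.mul_nonsing_inv A hdetA.ne'.isUnit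
  have hAinvt : A⁻¹ᵀ = A⁻¹ := by rw [Matrix.transpose_nonsing_inv, hAt]
  -- τ > 0
  have hτpos : 0 < τ := by
    have hv : (Sum.elim (-(A⁻¹ *ᵥ b)) (fun _ => (1 : ℝ)) : Fin m ⊕ Fin 1 → ℝ) ≠ 0 := by
      intro h
      have := congrFun h (Sum.inr 0)
      simp at this
    have h2 := hpd.dotProduct_mulVec_pos hv
    have hAw : A *ᵥ (A⁻¹ *ᵥ b) = b := by
      rw [Matrix.mulVec_mulVec, hAinv, Matrix.one_mulVec]
    have hBones : B *ᵥ (fun _ => (1 : ℝ)) = b := by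
      funext i
      simp [hB, Matrix.mulVec, dotProduct]
    have hkey : (star (Sum.elim (-(A⁻¹ *ᵥ b)) (fun _ => (1 : ℝ)))) ⬝ᵥ
        (Sgm *ᵥ Sum.elim (-(A⁻¹ *ᵥ b)) (fun _ => (1 : ℝ))) = τ := by
      rw [hSgm, Matrix.fromBlocks_mulVec]
      simp only [Sum.elim_comp_inl, Sum.elim_comp_inr]
      rw [star_trivial, sumElim_dotProduct_sumElim]
      rw [Matrix.mulVec_neg, Matrix.mulVec_neg, hAw, hBones]
      have hRw : R *ᵥ (A⁻¹ *ᵥ b) = fun _ => b ⬝ᵥ (A⁻¹ *ᵥ b) := by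
        funext i
        simp [hR, Matrix.mulVec, dotProduct]
      have hCones : C1 *ᵥ (fun _ => (1 : ℝ)) = fun _ => c := by
        funext i
        simp [hC1, Matrix.mulVec, dotProduct]
      rw [hRw, hCones]
      simp [dotProduct, hτ]
      ring
    rwa [hkey] at h2
  refine ⟨hτpos, ?_⟩
  have hτne : τ ≠ 0 := hτpos.ne'
  -- key 1×1 identity
  have hRAB : R * A⁻¹ * B = (c - τ) • (1 : Matrix (Fin 1) (Fin 1) ℝ) := by
    ext i j
    have hi : i = 0 := Subsingleton.elim _ _
    have hj : j = 0 := Subsingleton.elim _ _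
    subst hi hj
    rw [hR, hB, row_mul_col_entry]
    simp [Matrix.one_apply, hτ]
  have hC1c : C1 = c • (1 : Matrix (Fin 1) (Fin 1) ℝ) := by
    ext i j
    have hi : i = 0 := Subsingleton.elim _ _
    have hj : j = 0 := Subsingleton.elim _ _
    subst hi hj
    simp [hC1, Matrix.one_apply]
  -- determinant
  have hdet : Sgm.det = A.det * τ := by
    rw [hSgm, Matrix.det_fromBlocks₁₁]
    congr 1
    rw [Matrix.det_fin_one]
    have h0 : (⅟A : Matrix (Fin m) (Fin m) ℝ) = A⁻¹ := Matrix.invOf_eq_nonsing_inv A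
    rw [h0]
    have hentry := congrFun (congrFun hRAB 0) 0
    simp only [Matrix.smul_apply, Matrix.one_apply_eq, smul_eq_mul, mul_one] at hentry
    rw [Matrix.sub_apply, hentry]
    simp [hC1]
  -- the explicit inverse
  set M : Matrix (Fin m ⊕ Fin 1) (Fin m ⊕ Fin 1) ℝ :=
    Matrix.fromBlocks (A⁻¹ + τ⁻¹ • (A⁻¹ * B * R * A⁻¹)) (-(τ⁻¹ • (A⁻¹ * B)))
      (-(τ⁻¹ • (R * A⁻¹))) (τ⁻¹ • 1) with hM
  have hc : τ⁻¹ * (c - τ) = τ⁻¹ * c - 1 := by field_simp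
  have blk11 : A * (A⁻¹ + τ⁻¹ • (A⁻¹ * B * R * A⁻¹)) + B * (-(τ⁻¹ • (R * A⁻¹))) = 1 := by
    rw [Matrix.mul_add, Matrix.mul_smul, Matrix.mul_neg, Matrix.mul_smul]
    simp only [← Matrix.mul_assoc, hAinv, Matrix.one_mul]
    abel
  have blk12 : A * (-(τ⁻¹ • (A⁻¹ * B))) + B * (τ⁻¹ • (1 : Matrix (Fin 1) (Fin 1) ℝ)) = 0 := by
    simp only [Matrix.mul_neg, Matrix.mul_smul, Matrix.mul_one, ← Matrix.mul_assoc,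
      hAinv, Matrix.one_mul]
    abel
  have blk21 : R * (A⁻¹ + τ⁻¹ • (A⁻¹ * B * R * A⁻¹)) + C1 * (-(τ⁻¹ • (R * A⁻¹))) = 0 := by
    rw [hC1c, Matrix.mul_add, Matrix.mul_smul, Matrix.mul_neg, Matrix.mul_smul,
      Matrix.smul_mul, Matrix.one_mul]
    simp only [← Matrix.mul_assoc]
    rw [hRAB]
    simp only [Matrix.smul_mul, Matrix.one_mul, smul_smul, Matrix.mul_assoc]
    rw [hc]
    module
  have blk22 : R * (-(τ⁻¹ • (A⁻¹ * B))) + C1 * (τ⁻¹ • (1 : Matrix (Fin 1) (Fin 1) ℝ)) = 1 := by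
    rw [hC1c]
    simp only [Matrix.mul_neg, Matrix.mul_smul, Matrix.mul_one, ← Matrix.mul_assoc]
    rw [hRAB]
    simp only [smul_smul]
    rw [hc]
    module
  have hSgmM : Sgm * M = 1 := by
    rw [hSgm, hM, Matrix.fromBlocks_multiply, blk11, blk12, blk21, blk22,
      Matrix.fromBlocks_one]
  have hSinv : Sgm⁻¹ = M := Matrix.inv_eq_right_inv hSgmM
  -- block form of Yᵀ Y
  have hYtY : Yᵀ * Y = Matrix.fromBlocks (Y₁ᵀ * Y₁) (Y₁ᵀ * Yc) (Ycᵀ * Y₁) (Ycᵀ * Yc) := by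
    rw [hY]
    ext i j
    cases i <;> cases j <;>
      simp [Matrix.mul_apply, Matrix.fromCols, Matrix.fromBlocks, Matrix.transpose_apply, hYc]
  -- trace pieces
  have hZb : Z *ᵥ b = Y₁ *ᵥ (A⁻¹ *ᵥ b) := by rw [hZ, ← Matrix.mulVec_mulVec]
  have hbAinv : ∀ u : Fin m → ℝ, b ⬝ᵥ (A⁻¹ *ᵥ u) = (A⁻¹ *ᵥ b) ⬝ᵥ u := by
    intro u
    rw [Matrix.dotProduct_mulVec, ← hAinvt, Matrix.vecMul_transpose, hAinvt]
  have hYct : Ycᵀ = Matrix.of fun (_ : Fin 1) j => y j := by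
    ext i j; simp [hYc]
  have e1 : ((A⁻¹ * B * R * A⁻¹) * (Y₁ᵀ * Y₁)).trace
      = (Y₁ *ᵥ (A⁻¹ *ᵥ b)) ⬝ᵥ (Y₁ *ᵥ (A⁻¹ *ᵥ b)) := by
    have h : (A⁻¹ * B * R * A⁻¹) * (Y₁ᵀ * Y₁) = (A⁻¹ * B) * (R * (A⁻¹ * (Y₁ᵀ * Y₁))) := by
      simp only [Matrix.mul_assoc]
    rw [h, Matrix.trace_mul_comm, Matrix.trace_fin_one]
    have h2 : R * (A⁻¹ * (Y₁ᵀ * Y₁)) * (A⁻¹ * B)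
        = R * (A⁻¹ * (Y₁ᵀ * Y₁) * A⁻¹) * B := by
      simp only [Matrix.mul_assoc]
    rw [h2, hR, hB, row_mul_col_entry]
    rw [← Matrix.mulVec_mulVec, ← Matrix.mulVec_mulVec, hbAinv, ← Matrix.mulVec_mulVec]
    rw [Matrix.dotProduct_mulVec, Matrix.vecMul_transpose]
  have e2 : ((A⁻¹ * B) * (Ycᵀ * Y₁)).trace = y ⬝ᵥ (Y₁ *ᵥ (A⁻¹ *ᵥ b)) := by
    rw [Matrix.trace_mul_comm, Matrix.trace_fin_one]
    have h : (Ycᵀ * Y₁) * (A⁻¹ * B) = Ycᵀ * (Y₁ * A⁻¹) * B := by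
      simp only [Matrix.mul_assoc]
    rw [h, hYct, hB, row_mul_col_entry, ← Matrix.mulVec_mulVec]
  have e3 : ((R * A⁻¹) * (Y₁ᵀ * Yc)).trace = y ⬝ᵥ (Y₁ *ᵥ (A⁻¹ *ᵥ b)) := by
    rw [Matrix.trace_fin_one]
    have h : (R * A⁻¹) * (Y₁ᵀ * Yc) = R * (A⁻¹ * Y₁ᵀ) * Yc := by
      simp only [Matrix.mul_assoc]
    rw [h, hR, hYc, row_mul_col_entry, ← Matrix.mulVec_mulVec, hbAinv,
      Matrix.dotProduct_mulVec, Matrix.vecMul_transpose, dotProduct_comm]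
  have e4 : (Ycᵀ * Yc).trace = y ⬝ᵥ y := by
    rw [Matrix.trace_fin_one]
    simp [Matrix.mul_apply, hYc, dotProduct]
  have hsum : ∑ i, (y i - (Z *ᵥ b) i) ^ 2
      = y ⬝ᵥ y - 2 * (y ⬝ᵥ (Y₁ *ᵥ (A⁻¹ *ᵥ b)))
        + (Y₁ *ᵥ (A⁻¹ *ᵥ b)) ⬝ᵥ (Y₁ *ᵥ (A⁻¹ *ᵥ b)) := by
    rw [hZb]
    simp only [dotProduct, Finset.mul_sum, ← Finset.sum_add_distrib,
      ← Finset.sum_sub_distrib]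
    exact Finset.sum_congr rfl fun i _ => by ring
  have htr : (Sgm⁻¹ * (Yᵀ * Y)).trace
      = (A⁻¹ * (Y₁ᵀ * Y₁)).trace + τ⁻¹ * ∑ i, (y i - (Z *ᵥ b) i) ^ 2 := by
    rw [hSinv, hYtY, hM, Matrix.fromBlocks_multiply, trace_fromBlocks']
    rw [Matrix.add_mul, Matrix.smul_mul, Matrix.neg_mul, Matrix.smul_mul,
      Matrix.neg_mul, Matrix.smul_mul, Matrix.smul_mul, Matrix.one_mul]
    rw [Matrix.trace_add, Matrix.trace_add, Matrix.trace_add, Matrix.trace_neg,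
      Matrix.trace_neg, Matrix.trace_smul, Matrix.trace_smul, Matrix.trace_smul,
      Matrix.trace_smul]
    rw [e1, e2, e3, e4, hsum]
    simp only [smul_eq_mul]
    ring
  -- final arithmetic
  rw [hdet, htr, Real.log_mul hdetA.ne' hτne]
  have hnne : (n : ℝ) ≠ 0 := Nat.cast_ne_zero.2 (by omega)
  field_simp
  ring
end

section
/- Let 𝒢 = (V, E) be a graph on V = {1,…,p}, let Y be an n×p real matrix, κ ≥ 0, λ ≥ 0, and let Y^{(κ)} = (Yᵀ, √(nκ)·I_p)ᵀ. Let Σ = (σ_{jk}) be a p×p positive definite matrix adapted to 𝒢, i.e. σ_{jk} = 0 whenever j ≠ k and {j,k} ∉ E. Fix i ∈ V with boundary bd(i) = {j : {i,j} ∈ E}, set τ_i = σ_{ii} − σ_{−i,i}ᵀ·(Σ_{−i,−i})⁻¹·σ_{−i,i}, let Z^{(κ)}_{−i} = Y^{(κ)}_{−i}·(Σ_{−i,−i})⁻¹, let Z^{(κ)}_{bd(i)} be the submatrix of Z^{(κ)}_{−i} with columns indexed by bd(i), let σ_{bd(i),i} be the subvector of σ_{−i,i} indexed by bd(i), and let y_i^{(κ)}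 be the i-th column of Y^{(κ)}. Then ℓ_Y(Σ) − P_{λ,κ}(Σ) = ℓ_{Y^{(κ)}_{−i},n}(Σ_{−i,−i}) − λ·∑_{j≠k, j,k≠i}|σ_{jk}| − log τ_i − (1/(nτ_i))·‖y_i^{(κ)} − Z^{(κ)}_{bd(i)}·σ_{bd(i),i}‖₂² − 2λ·∑_{j∈bd(i)}|σ_{ji}|. -/
open Matrix

lemma aux_sum_split {α : Type*} [Fintype α] [DecidableEq α] {M : Type*} [AddCommMonoid M]
    (i : α) (f : α → M) :
    ∑ j, f j = f i + ∑ a : {k : α // k ≠ i}, f a.1 := by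
  classical
  rw [Finset.sum_eq_sum_sdiff_singleton_add (Finset.mem_univ i) f, add_comm]
  congr 1
  exact Finset.sum_subtype _ (fun x => by simp) f

lemma aux_bd_sum {p : ℕ} (G : SimpleGraph (Fin p)) [DecidableRel G.Adj] (i : Fin p)
    (g : {k : Fin p // k ≠ i} → ℝ) (h0 : ∀ a, ¬ G.Adj i a.1 → g a = 0) :
    ∑ a : {k : Fin p // G.Adj i k}, g ⟨a.1, a.2.ne'⟩ = ∑ a : {k : Fin p // k ≠ i}, g a := by
  classical
  set g' : Fin p → ℝ := fun k => if h : k ≠ i then g ⟨k, h⟩ else 0 with hg'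
  have h1 : ∑ a : {k : Fin p // k ≠ i}, g a = ∑ k ∈ Finset.univ.filter (· ≠ i), g' k := by
    rw [Finset.sum_subtype (p := fun k => k ≠ i) _ (fun x => by simp) g']
    exact Finset.sum_congr rfl fun a _ => by simp [hg', a.2]
  have h2 : ∑ a : {k : Fin p // G.Adj i k}, g ⟨a.1, a.2.ne'⟩
      = ∑ k ∈ Finset.univ.filter (G.Adj i ·), g' k := by
    rw [Finset.sum_subtype (p := fun k => G.Adj i k) _ (fun x => by simp) g']
    exact Finset.sum_congr rfl fun a _ => by simp [hg', a.2.ne']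
  rw [h1, h2]
  apply Finset.sum_subset
  · intro k hk
    simp only [Finset.mem_filter, Finset.mem_univ, true_and] at hk ⊢
    exact fun h => (G.ne_of_adj hk) h.symm
  · intro k _ hk
    simp only [Finset.mem_filter, Finset.mem_univ, true_and] at hk
    by_cases h : k ≠ i
    · simp [hg', h, h0 ⟨k, h⟩ hk]
    · simp [hg', h]

set_option maxHeartbeats 1000000

/-- Corollary 1: decomposition of the penalized objective
`ℓ_Y(Σ) − P_{λ,κ}(Σ)` into a marginal penalized loglikelihood and a penalized
conditional (regression) part, for `Σ` adapted to a graph `G`. -/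
theorem stmt5 (n p : ℕ) (hn : 1 ≤ n)
    (G : SimpleGraph (Fin p)) [DecidableRel G.Adj]
    (Y : Matrix (Fin n) (Fin p) ℝ) (κ lam : ℝ) (hκ : 0 ≤ κ) (hlam : 0 ≤ lam)
    (Yκ : Matrix (Fin n ⊕ Fin p) (Fin p) ℝ)
    (hYκ : Yκ = Matrix.fromRows Y
      (Real.sqrt ((n : ℝ) * κ) • (1 : Matrix (Fin p) (Fin p) ℝ)))
    (Sgm : Matrix (Fin p) (Fin p) ℝ) (hpd : Sgm.PosDef)
    (hadapt : ∀ j k, j ≠ k → ¬ G.Adj j k → Sgm j k = 0)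
    (i : Fin p)
    (Sgmm : Matrix {k : Fin p // k ≠ i} {k : Fin p // k ≠ i} ℝ)
    (hSgmm : Sgmm = Matrix.of fun a b => Sgm a.1 b.1)
    (τi : ℝ)
    (hτi : τi = Sgm i i -
      (fun a : {k : Fin p // k ≠ i} => Sgm a.1 i) ⬝ᵥ
        (Sgmm⁻¹ *ᵥ fun a : {k : Fin p // k ≠ i} => Sgm a.1 i))
    (Yκm : Matrix (Fin n ⊕ Fin p) {k : Fin p // k ≠ i} ℝ)
    (hYκm : Yκm = Matrix.of fun r a => Yκ r a.1)
    (Z : Matrix (Fin n ⊕ Fin p) {k : Fin p // k ≠ i} ℝ)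
    (hZ : Z = Yκm * Sgmm⁻¹)
    (Zbd : Matrix (Fin n ⊕ Fin p) {k : Fin p // G.Adj i k} ℝ)
    (hZbd : Zbd = Matrix.of fun r a => Z r ⟨a.1, a.2.ne'⟩)
    (σbd : {k : Fin p // G.Adj i k} → ℝ) (hσbd : σbd = fun a => Sgm a.1 i) :
    (-Real.log Sgm.det - (1 / (n : ℝ)) * (Sgm⁻¹ * (Yᵀ * Y)).trace)
        - (lam * ∑ j, ∑ k, (if j ≠ k then |Sgm j k| else 0)
            + κ * ∑ j, Sgm⁻¹ j j)
      = (-Real.log Sgmm.det - (1 / (n : ℝ)) * (Sgmm⁻¹ * (Yκmᵀ * Yκm)).trace)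
        - lam * (∑ a : {k : Fin p // k ≠ i}, ∑ b : {k : Fin p // k ≠ i},
            if a ≠ b then |Sgmm a b| else 0)
        - Real.log τi
        - (1 / ((n : ℝ) * τi)) * ∑ r, (Yκ r i - (Zbd *ᵥ σbd) r) ^ 2
        - 2 * lam * ∑ a : {k : Fin p // G.Adj i k}, |Sgm a.1 i| := by
  classical
  -- symmetry of Sgm
  have hsymm : ∀ j k, Sgm j k = Sgm k j := by
    intro j k
    have := hpd.isHermitian
    have h2 := congrFun (congrFun this.symm k) j
    simpa [conjTranspose_apply] using h2.symm
  set s : {k : Fin p // k ≠ i} → ℝ := fun a => Sgm a.1 i with hs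
  -- Sgmm is positive definite
  have hApd : Sgmm.PosDef := by
    refine Matrix.PosDef.of_dotProduct_mulVec_pos ?_ ?_
    · ext a b
      simp only [conjTranspose_apply, hSgmm, Matrix.of_apply, star_trivial]
      exact hsymm b.1 a.1
    · intro x hx
      set x' : Fin p → ℝ := fun k => if h : k ≠ i then x ⟨k, h⟩ else 0 with hx'
      have hx0 : x' ≠ 0 := fun h => hx (funext fun a => by
        have := congrFun h a
        simpa [hx', a.2] using this)
      have hmv : ∀ j, (Sgm *ᵥ x') j = ∑ a : {k : Fin p // k ≠ i}, Sgm j a.1 * x a := by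
        intro j
        show ∑ k, Sgm j k * x' k = _
        rw [aux_sum_split i (f := fun k => Sgm j k * x' k)]
        simp only [hx']
        rw [dif_neg (not_not.mpr rfl)]
        simp only [mul_zero, zero_add]
        exact Finset.sum_congr rfl fun a _ => by rw [dif_pos a.2]
      have key : star x ⬝ᵥ Sgmm *ᵥ x = star x' ⬝ᵥ Sgm *ᵥ x' := by
        simp only [dotProduct, star_trivial, Pi.star_apply]
        rw [aux_sum_split i (f := fun j => x' j * (Sgm *ᵥ x') j)]
        simp only [hmv]
        have hzero : x' i = 0 := by simp [hx']
        rw [hzero, zero_mul, zero_add]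
        apply Finset.sum_congr rfl
        intro a _
        have : x' a.1 = x a := by simp [hx', a.2]
        rw [this]
        congr 1
        show (Sgmm *ᵥ x) a = _
        simp [mulVec, dotProduct, hSgmm]
      rw [key]
      exact hpd.dotProduct_mulVec_pos hx0
  have hAdet : 0 < Sgmm.det := hApd.det_pos
  have hAunit : IsUnit Sgmm.det := hAdet.ne'.isUnit
  have hAB : Sgmm * Sgmm⁻¹ = 1 := mul_nonsing_inv _ hAunit
  have hBA : Sgmm⁻¹ * Sgmm = 1 := nonsing_inv_mul _ hAunit
  have hAsymT : Sgmmᵀ = Sgmm := by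
    ext a b
    simp only [transpose_apply, hSgmm, Matrix.of_apply]
    exact hsymm b.1 a.1
  have hBsymm : ∀ a b, Sgmm⁻¹ a b = Sgmm⁻¹ b a := by
    intro a b
    calc Sgmm⁻¹ a b = (Sgmm⁻¹)ᵀ b a := rfl
      _ = (Sgmmᵀ)⁻¹ b a := by rw [Matrix.transpose_nonsing_inv]
      _ = Sgmm⁻¹ b a := by rw [hAsymT]
  set u : {k : Fin p // k ≠ i} → ℝ := Sgmm⁻¹ *ᵥ s with hu
  have hAu : Sgmm *ᵥ u = s := by
    rw [hu, mulVec_mulVec, hAB, one_mulVec]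
  have hAu' : ∀ b : {k : Fin p // k ≠ i}, ∑ a, Sgm b.1 a.1 * u a = Sgm b.1 i := by
    intro b
    have := congrFun hAu b
    simpa [mulVec, dotProduct, hSgmm, hs] using this
  have hτ : τi = Sgm i i - ∑ a, s a * u a := by
    rw [hτi]; rfl
  -- positivity of the Schur complement
  have hτpos : 0 < τi := by
    set v : Fin p → ℝ := fun k => if h : k ≠ i then -(u ⟨k, h⟩) else 1 with hv
    have hvne : v ≠ 0 := fun h => by
      have := congrFun h i
      simp [hv] at this
    have hvi : v i = 1 := by simp [hv]
    have hMv : ∀ j, (Sgm *ᵥ v) j = if j = i then τi else 0 := by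
      intro j
      have e : (Sgm *ᵥ v) j = Sgm j i - ∑ a : {k : Fin p // k ≠ i}, Sgm j a.1 * u a := by
        show ∑ k, Sgm j k * v k = _
        rw [aux_sum_split i (f := fun k => Sgm j k * v k)]
        simp only [hv]
        rw [dif_neg (not_not.mpr rfl), mul_one, sub_eq_add_neg]
        congr 1
        rw [← Finset.sum_neg_distrib]
        exact Finset.sum_congr rfl fun a _ => by rw [dif_pos a.2]; ring
      by_cases hj : j = i
      · rw [e, if_pos hj, hj, hτ]
        congr 1
        exact Finset.sum_congr rfl fun a _ => by rw [hsymm i a.1]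
      · rw [e, if_neg hj, hAu' ⟨j, hj⟩, sub_self]
    have h2 : star v ⬝ᵥ Sgm *ᵥ v = τi := by
      simp only [dotProduct, star_trivial, Pi.star_apply]
      calc ∑ j, v j * (Sgm *ᵥ v) j = ∑ j, v j * (if j = i then τi else 0) := by
            exact Finset.sum_congr rfl fun j _ => by rw [hMv j]
        _ = v i * τi := by
            simp only [mul_ite, mul_zero]
            simp
        _ = τi := by rw [hvi, one_mul]
    have := hpd.dotProduct_mulVec_pos hvne
    rwa [h2] at this
  -- the explicit inverse
  set Θ : Matrix (Fin p) (Fin p) ℝ := Matrix.of (fun j k =>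
      if hj : j = i then (if hk : k = i then 1/τi else -(u ⟨k, hk⟩)/τi)
      else if hk : k = i then -(u ⟨j, hj⟩)/τi
      else Sgmm⁻¹ ⟨j, hj⟩ ⟨k, hk⟩ + u ⟨j, hj⟩ * u ⟨k, hk⟩ / τi) with hΘ
  have hτne : τi ≠ 0 := hτpos.ne'
  have hΘii : Θ i i = 1/τi := by simp [hΘ]
  have hΘ1 : ∀ b : {k : Fin p // k ≠ i}, Θ i b.1 = -(u b)/τi := fun b => by
    simp [hΘ, b.2]
  have hΘ2 : ∀ a : {k : Fin p // k ≠ i}, Θ a.1 i = -(u a)/τi := fun a => by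
    simp [hΘ, a.2]
  have hΘ3 : ∀ a b : {k : Fin p // k ≠ i}, Θ a.1 b.1 = Sgmm⁻¹ a b + u a * u b / τi :=
    fun a b => by simp [hΘ, a.2, b.2]
  have hq1 : ∀ kb : {k : Fin p // k ≠ i}, ∑ a, Sgm i a.1 * Sgmm⁻¹ a kb = u kb := by
    intro kb
    have h0 : u kb = ∑ a, Sgmm⁻¹ kb a * s a := rfl
    rw [h0]
    refine Finset.sum_congr rfl fun a _ => ?_
    simp only [hs]
    rw [hsymm i a.1, hBsymm a kb, mul_comm]
  have hq2 : ∑ a, s a * u a = Sgm i i - τi := by rw [hτ]; ring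
  have hq3 : ∀ (jb kb : {k : Fin p // k ≠ i}),
      ∑ a, Sgm jb.1 a.1 * Sgmm⁻¹ a kb = (1 : Matrix _ _ ℝ) jb kb := by
    intro jb kb
    have h0 := congrFun (congrFun hAB jb) kb
    rw [Matrix.mul_apply] at h0
    rw [← h0]
    exact Finset.sum_congr rfl fun a _ => by rw [hSgmm]; rfl
  have hSTh : Sgm * Θ = 1 := by
    ext j k
    rw [Matrix.mul_apply, aux_sum_split i (f := fun l => Sgm j l * Θ l k)]
    by_cases hj : j = i <;> by_cases hk : k = i
    · rw [hj, hk, hΘii, Matrix.one_apply_eq]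
      rw [Finset.sum_congr rfl fun (a : {k : Fin p // k ≠ i}) (_ : a ∈ Finset.univ) =>
        (by rw [hΘ2 a, hsymm i a.1] :
          Sgm i a.1 * Θ a.1 i = Sgm a.1 i * (-(u a)/τi))]
      have e2 : ∑ a : {k : Fin p // k ≠ i}, Sgm a.1 i * (-(u a)/τi)
          = -(∑ a, s a * u a)/τi := by
        calc ∑ a : {k : Fin p // k ≠ i}, Sgm a.1 i * (-(u a)/τi)
            = ∑ a : {k : Fin p // k ≠ i}, -(s a * u a)/τi :=
              Finset.sum_congr rfl fun a _ => by simp only [hs]; ring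
          _ = (∑ a : {k : Fin p // k ≠ i}, -(s a * u a))/τi := by rw [Finset.sum_div]
          _ = -(∑ a : {k : Fin p // k ≠ i}, s a * u a)/τi := by rw [Finset.sum_neg_distrib]
      rw [e2, hq2]
      field_simp
      ring
    · have hkb : ¬ k = i := hk
      rw [hj, Matrix.one_apply_ne (fun h => hk h.symm)]
      have h1 : Θ i k = -(u ⟨k, hkb⟩)/τi := hΘ1 ⟨k, hkb⟩
      have h3 : ∀ a : {k : Fin p // k ≠ i},
          Θ a.1 k = Sgmm⁻¹ a ⟨k, hkb⟩ + u a * u ⟨k, hkb⟩ / τi := fun a => hΘ3 a ⟨k, hkb⟩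
      rw [h1]
      rw [Finset.sum_congr rfl fun (a : {k : Fin p // k ≠ i}) (_ : a ∈ Finset.univ) =>
        (by rw [h3 a]; simp only [hs]; rw [hsymm i a.1]; ring :
          Sgm i a.1 * Θ a.1 k
            = Sgm i a.1 * Sgmm⁻¹ a ⟨k, hkb⟩ + (s a * u a) * (u ⟨k, hkb⟩ / τi))]
      rw [Finset.sum_add_distrib, ← Finset.sum_mul, hq1 ⟨k, hkb⟩, hq2]
      field_simp
      ring
    · rw [hk, hΘii, Matrix.one_apply_ne hj]
      rw [Finset.sum_congr rfl fun (a : {k : Fin p // k ≠ i}) (_ : a ∈ Finset.univ) =>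
        (by rw [hΘ2 a]; ring :
          Sgm j a.1 * Θ a.1 i = -(Sgm j a.1 * u a)/τi)]
      rw [← Finset.sum_div, Finset.sum_neg_distrib, hAu' ⟨j, hj⟩]
      field_simp
      ring
    · have hkb : ¬ k = i := hk
      have h1 : Θ i k = -(u ⟨k, hkb⟩)/τi := hΘ1 ⟨k, hkb⟩
      have h3 : ∀ a : {k : Fin p // k ≠ i},
          Θ a.1 k = Sgmm⁻¹ a ⟨k, hkb⟩ + u a * u ⟨k, hkb⟩ / τi := fun a => hΘ3 a ⟨k, hkb⟩
      rw [h1]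
      rw [Finset.sum_congr rfl fun (a : {k : Fin p // k ≠ i}) (_ : a ∈ Finset.univ) =>
        (by rw [h3 a]; ring :
          Sgm j a.1 * Θ a.1 k
            = Sgm j a.1 * Sgmm⁻¹ a ⟨k, hkb⟩ + (Sgm j a.1 * u a) * (u ⟨k, hkb⟩ / τi))]
      rw [Finset.sum_add_distrib, ← Finset.sum_mul, hq3 ⟨j, hj⟩ ⟨k, hkb⟩, hAu' ⟨j, hj⟩]
      have hone : (1 : Matrix {k : Fin p // k ≠ i} {k : Fin p // k ≠ i} ℝ) ⟨j, hj⟩ ⟨k, hkb⟩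
          = (1 : Matrix (Fin p) (Fin p) ℝ) j k := by
        by_cases hjk : j = k
        · rw [Matrix.one_apply, if_pos (by exact Subtype.ext hjk), hjk, Matrix.one_apply_eq]
        · rw [Matrix.one_apply_ne (fun h => hjk (congrArg Subtype.val h)),
            Matrix.one_apply_ne hjk]
      rw [hone]
      ring
  have hinv : Sgm⁻¹ = Θ := inv_eq_right_inv hSTh
  -- determinant factorization
  have hdet : Sgm.det = Sgmm.det * τi := by
    haveI : Invertible Sgmm := Sgmm.invertibleOfIsUnitDet hAunit
    haveI : Unique {k : Fin p // ¬ k ≠ i} :=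
      ⟨⟨⟨i, not_not.mpr rfl⟩⟩, fun x => Subtype.ext (not_not.mp x.2)⟩
    set e : {k : Fin p // k ≠ i} ⊕ {k : Fin p // ¬ k ≠ i} ≃ Fin p :=
      Equiv.sumCompl (fun k : Fin p => k ≠ i) with he
    have h1 : Sgm.submatrix e e = Matrix.fromBlocks Sgmm
        (Matrix.of fun (a : {k : Fin p // k ≠ i}) (_ : {k : Fin p // ¬ k ≠ i}) => Sgm a.1 i)
        (Matrix.of fun (_ : {k : Fin p // ¬ k ≠ i}) (b : {k : Fin p // k ≠ i}) => Sgm i b.1)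
        (Matrix.of fun (_ _ : {k : Fin p // ¬ k ≠ i}) => Sgm i i) := by
      ext (a | a) (b | b) <;>
        simp only [submatrix_apply, he, Equiv.sumCompl_apply_inl, Equiv.sumCompl_apply_inr,
          fromBlocks_apply₁₁, fromBlocks_apply₁₂, fromBlocks_apply₂₁, fromBlocks_apply₂₂,
          Matrix.of_apply, hSgmm]
      · rw [not_not.mp b.2]
      · rw [not_not.mp a.2]
      · rw [not_not.mp a.2, not_not.mp b.2]
    have h2 : Sgm.det = (Sgm.submatrix e e).det := (det_submatrix_equiv_self e Sgm).symm
    rw [h2, h1, Matrix.det_fromBlocks₁₁]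
    congr 1
    rw [Matrix.det_unique]
    have hd : (default : {k : Fin p // ¬ k ≠ i}).1 = i := not_not.mp (default : {k : Fin p // ¬ k ≠ i}).2
    rw [Matrix.sub_apply, Matrix.mul_apply]
    rw [hτ]
    have hCA : ∀ b : {k : Fin p // k ≠ i},
        ((Matrix.of fun (_ : {k : Fin p // ¬ k ≠ i}) (b : {k : Fin p // k ≠ i}) => Sgm i b.1) * ⅟Sgmm) default b
          = ∑ a, s a * Sgmm⁻¹ a b := by
      intro b
      rw [Matrix.mul_apply]
      refine Finset.sum_congr rfl fun a _ => ?_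
      rw [invOf_eq_nonsing_inv, Matrix.of_apply]
      simp only [hs]
      rw [hsymm i a.1]
    have hsum : ∑ b, ((Matrix.of fun (_ : {k : Fin p // ¬ k ≠ i}) (b : {k : Fin p // k ≠ i}) => Sgm i b.1) * ⅟Sgmm)
          default b * (Matrix.of fun (a : {k : Fin p // k ≠ i}) (_ : {k : Fin p // ¬ k ≠ i}) => Sgm a.1 i) b default
        = ∑ a, s a * u a := by
      rw [Finset.sum_congr rfl fun b (_ : b ∈ Finset.univ) => by
        rw [hCA b, Matrix.of_apply, Finset.sum_mul]]
      rw [Finset.sum_comm]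
      refine Finset.sum_congr rfl fun a _ => ?_
      have h0 : u a = ∑ b, Sgmm⁻¹ a b * s b := rfl
      rw [h0, Finset.mul_sum]
      refine Finset.sum_congr rfl fun b _ => ?_
      simp only [hs]
      ring
    rw [hsum]
    rfl
  -- Gram matrix of augmented data
  have hgram : Yκᵀ * Yκ = Yᵀ * Y + ((n : ℝ) * κ) • 1 := by
    have hc : Real.sqrt ((n : ℝ) * κ) * Real.sqrt ((n : ℝ) * κ) = (n : ℝ) * κ :=
      Real.mul_self_sqrt (by positivity)
    ext j k
    have h2 : ∑ l : Fin p, (Real.sqrt ((n : ℝ) * κ) • (1 : Matrix (Fin p) (Fin p) ℝ)) l j *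
        (Real.sqrt ((n : ℝ) * κ) • (1 : Matrix (Fin p) (Fin p) ℝ)) l k
        = ((n : ℝ) * κ) * (1 : Matrix (Fin p) (Fin p) ℝ) j k := by
      have hterm : ∀ l, (Real.sqrt ((n : ℝ) * κ) • (1 : Matrix (Fin p) (Fin p) ℝ)) l j *
          (Real.sqrt ((n : ℝ) * κ) • (1 : Matrix (Fin p) (Fin p) ℝ)) l k
          = if l = j then (if l = k then ((n : ℝ) * κ) else 0) else 0 := by
        intro l
        simp only [Matrix.smul_apply, smul_eq_mul, Matrix.one_apply, mul_ite, mul_one,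
          mul_zero, ite_mul, zero_mul]
        split_ifs <;> first | exact hc | rfl
      rw [Finset.sum_congr rfl fun l _ => hterm l]
      rw [Finset.sum_ite_eq' Finset.univ j (fun l => if l = k then ((n : ℝ) * κ) else 0)]
      by_cases hjk : j = k <;> simp [hjk, Matrix.one_apply]
    rw [Matrix.add_apply, Matrix.smul_apply, smul_eq_mul, Matrix.mul_apply, Matrix.mul_apply]
    simp only [transpose_apply, hYκ, Fintype.sum_sum_type, fromRows_apply_inl, fromRows_apply_inr]
    rw [h2]
  -- trace splitting of ridge term
  have htr1 : (Sgm⁻¹ * (Yᵀ * Y)).trace + ((n : ℝ) * κ) * ∑ j, Sgm⁻¹ j j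
      = (Sgm⁻¹ * (Yκᵀ * Yκ)).trace := by
    rw [hgram, Matrix.mul_add, trace_add, Matrix.mul_smul, trace_smul, Matrix.mul_one]
    simp [Matrix.trace, Matrix.diag, smul_eq_mul]
  -- residual identity
  have hres : ∀ r, (Zbd *ᵥ σbd) r = ∑ a, u a * Yκ r a.1 := by
    intro r
    have e1 : (Zbd *ᵥ σbd) r
        = ∑ a : {k : Fin p // G.Adj i k}, (fun b : {k : Fin p // k ≠ i} => Z r b * s b) ⟨a.1, a.2.ne'⟩ := by
      simp [mulVec, dotProduct, hZbd, hσbd, hs]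
    rw [e1]
    rw [aux_bd_sum G i (fun b : {k : Fin p // k ≠ i} => Z r b * s b) (fun a hna => by
      have h0 : Sgm a.1 i = 0 := hadapt a.1 i a.2 (fun h => hna h.symm)
      show Z r a * s a = 0
      rw [hs]
      simp only [h0]
      ring)]
    calc ∑ a, Z r a * s a = (Z *ᵥ s) r := rfl
      _ = (Yκm *ᵥ u) r := by rw [hZ, ← mulVec_mulVec, ← hu]
      _ = ∑ a, u a * Yκ r a.1 := by
          simp [mulVec, dotProduct, hYκm, mul_comm]
  -- core trace identity
  have htr2 : (Sgm⁻¹ * (Yκᵀ * Yκ)).trace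
      = (Sgmm⁻¹ * (Yκmᵀ * Yκm)).trace
        + (1/τi) * ∑ r, (Yκ r i - (Zbd *ᵥ σbd) r) ^ 2 := by
    rw [hinv]
    have tr_lhs : (Θ * (Yκᵀ * Yκ)).trace
        = ∑ r, ∑ j, ∑ k, Θ j k * (Yκ r k * Yκ r j) := by
      rw [Matrix.trace]
      simp only [Matrix.diag_apply, Matrix.mul_apply, transpose_apply, Finset.mul_sum]
      calc ∑ j, ∑ k, ∑ r, Θ j k * (Yκ r k * Yκ r j)
          = ∑ j, ∑ r, ∑ k, Θ j k * (Yκ r k * Yκ r j) :=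
            Finset.sum_congr rfl fun j _ => Finset.sum_comm
        _ = ∑ r, ∑ j, ∑ k, Θ j k * (Yκ r k * Yκ r j) := Finset.sum_comm
    have tr_rhs : (Sgmm⁻¹ * (Yκmᵀ * Yκm)).trace
        = ∑ r, ∑ a, ∑ b, Sgmm⁻¹ a b * (Yκ r b.1 * Yκ r a.1) := by
      rw [Matrix.trace]
      simp only [Matrix.diag_apply, Matrix.mul_apply, transpose_apply, Finset.mul_sum,
        hYκm, Matrix.of_apply]
      calc ∑ a, ∑ b, ∑ r, Sgmm⁻¹ a b * (Yκ r b.1 * Yκ r a.1)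
          = ∑ a, ∑ r, ∑ b, Sgmm⁻¹ a b * (Yκ r b.1 * Yκ r a.1) :=
            Finset.sum_congr rfl fun a _ => Finset.sum_comm
        _ = ∑ r, ∑ a, ∑ b, Sgmm⁻¹ a b * (Yκ r b.1 * Yκ r a.1) := Finset.sum_comm
    have row : ∀ r, ∑ j, ∑ k, Θ j k * (Yκ r k * Yκ r j)
        = (∑ a, ∑ b, Sgmm⁻¹ a b * (Yκ r b.1 * Yκ r a.1))
          + (Yκ r i - ∑ a, u a * Yκ r a.1) ^ 2 / τi := by
      intro r
      rw [aux_sum_split i (f := fun j => ∑ k, Θ j k * (Yκ r k * Yκ r j))]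
      have hinner_i : ∑ k, Θ i k * (Yκ r k * Yκ r i)
          = (1/τi) * (Yκ r i * Yκ r i)
            + ∑ b : {k : Fin p // k ≠ i}, (-(u b)/τi) * (Yκ r b.1 * Yκ r i) := by
        rw [aux_sum_split i (f := fun k => Θ i k * (Yκ r k * Yκ r i)), hΘii]
        congr 1
        exact Finset.sum_congr rfl fun b _ => by rw [hΘ1 b]
      have hinner_a : ∀ a : {k : Fin p // k ≠ i}, ∑ k, Θ a.1 k * (Yκ r k * Yκ r a.1)
          = (-(u a)/τi) * (Yκ r i * Yκ r a.1)
            + ∑ b : {k : Fin p // k ≠ i},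
                (Sgmm⁻¹ a b + u a * u b / τi) * (Yκ r b.1 * Yκ r a.1) := by
        intro a
        rw [aux_sum_split i (f := fun k => Θ a.1 k * (Yκ r k * Yκ r a.1)), hΘ2 a]
        congr 1
        exact Finset.sum_congr rfl fun b _ => by rw [hΘ3 a b]
      rw [hinner_i, Finset.sum_congr rfl fun a (_ : a ∈ Finset.univ) => hinner_a a]
      rw [Finset.sum_add_distrib]
      have e1 : ∑ b : {k : Fin p // k ≠ i}, (-(u b)/τi) * (Yκ r b.1 * Yκ r i)
          = -((∑ a, u a * Yκ r a.1) * Yκ r i)/τi := by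
        calc ∑ b : {k : Fin p // k ≠ i}, (-(u b)/τi) * (Yκ r b.1 * Yκ r i)
            = ∑ b : {k : Fin p // k ≠ i}, -((u b * Yκ r b.1) * Yκ r i)/τi :=
              Finset.sum_congr rfl fun b _ => by ring
          _ = (∑ b : {k : Fin p // k ≠ i}, -((u b * Yκ r b.1) * Yκ r i))/τi := by
              rw [Finset.sum_div]
          _ = -(∑ b : {k : Fin p // k ≠ i}, (u b * Yκ r b.1) * Yκ r i)/τi := by
              rw [Finset.sum_neg_distrib]
          _ = -((∑ b : {k : Fin p // k ≠ i}, u b * Yκ r b.1) * Yκ r i)/τi := by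
              rw [← Finset.sum_mul]
      have e3 : ∑ a : {k : Fin p // k ≠ i}, (-(u a)/τi) * (Yκ r i * Yκ r a.1)
          = -((∑ a, u a * Yκ r a.1) * Yκ r i)/τi := by
        calc ∑ a : {k : Fin p // k ≠ i}, (-(u a)/τi) * (Yκ r i * Yκ r a.1)
            = ∑ a : {k : Fin p // k ≠ i}, -((u a * Yκ r a.1) * Yκ r i)/τi :=
              Finset.sum_congr rfl fun a _ => by ring
          _ = (∑ a : {k : Fin p // k ≠ i}, -((u a * Yκ r a.1) * Yκ r i))/τi := by
              rw [Finset.sum_div]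
          _ = -(∑ a : {k : Fin p // k ≠ i}, (u a * Yκ r a.1) * Yκ r i)/τi := by
              rw [Finset.sum_neg_distrib]
          _ = -((∑ a : {k : Fin p // k ≠ i}, u a * Yκ r a.1) * Yκ r i)/τi := by
              rw [← Finset.sum_mul]
      have e2 : ∀ a : {k : Fin p // k ≠ i},
          ∑ b : {k : Fin p // k ≠ i}, (Sgmm⁻¹ a b + u a * u b / τi) * (Yκ r b.1 * Yκ r a.1)
          = (∑ b, Sgmm⁻¹ a b * (Yκ r b.1 * Yκ r a.1))
            + (u a * Yκ r a.1) * (∑ b, u b * Yκ r b.1) / τi := by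
        intro a
        rw [Finset.sum_congr rfl fun (b : {k : Fin p // k ≠ i}) (_ : b ∈ Finset.univ) =>
          (by ring :
            (Sgmm⁻¹ a b + u a * u b / τi) * (Yκ r b.1 * Yκ r a.1)
              = Sgmm⁻¹ a b * (Yκ r b.1 * Yκ r a.1) + (u a * Yκ r a.1) * (u b * Yκ r b.1) / τi)]
        rw [Finset.sum_add_distrib]
        congr 1
        rw [← Finset.sum_div, ← Finset.mul_sum]
      rw [e1, e3, Finset.sum_congr rfl fun a (_ : a ∈ Finset.univ) => e2 a,
        Finset.sum_add_distrib]
      have e4 : ∑ a : {k : Fin p // k ≠ i},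
          (u a * Yκ r a.1) * (∑ b, u b * Yκ r b.1) / τi
          = ((∑ a, u a * Yκ r a.1) * (∑ a, u a * Yκ r a.1))/τi := by
        rw [← Finset.sum_div, ← Finset.sum_mul]
      rw [e4]
      set A := Yκ r i with hA
      set S1 := ∑ a : {k : Fin p // k ≠ i}, u a * Yκ r a.1 with hS1
      set S2 := ∑ a : {k : Fin p // k ≠ i}, ∑ b : {k : Fin p // k ≠ i},
        Sgmm⁻¹ a b * (Yκ r b.1 * Yκ r a.1) with hS2
      field_simp
      ring
    rw [tr_lhs, tr_rhs, Finset.sum_congr rfl fun r (_ : r ∈ Finset.univ) => row r,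
      Finset.sum_add_distrib]
    congr 1
    rw [Finset.sum_congr rfl fun r (_ : r ∈ Finset.univ) =>
      (by rw [hres r] :
        (Yκ r i - (Zbd *ᵥ σbd) r) ^ 2 = (Yκ r i - ∑ a, u a * Yκ r a.1) ^ 2)]
    rw [Finset.mul_sum]
    exact Finset.sum_congr rfl fun r _ => by ring
  -- penalty splitting
  have hpen : ∑ j, ∑ k, (if j ≠ k then |Sgm j k| else 0)
      = (∑ a : {k : Fin p // k ≠ i}, ∑ b : {k : Fin p // k ≠ i},
            if a ≠ b then |Sgmm a b| else 0)
        + 2 * ∑ a : {k : Fin p // G.Adj i k}, |Sgm a.1 i| := by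
    have hbd : ∑ b : {k : Fin p // k ≠ i}, |Sgm b.1 i|
        = ∑ a : {k : Fin p // G.Adj i k}, |Sgm a.1 i| := by
      rw [← aux_bd_sum G i (fun b => |Sgm b.1 i|) (fun a hna => by
        show |Sgm a.1 i| = 0
        rw [hadapt a.1 i a.2 (fun h => hna h.symm)]; exact abs_zero)]
    have hrow_i : ∑ k, (if i ≠ k then |Sgm i k| else 0)
        = ∑ b : {k : Fin p // k ≠ i}, |Sgm b.1 i| := by
      rw [aux_sum_split i (f := fun k => if i ≠ k then |Sgm i k| else 0)]
      rw [if_neg (by simp), zero_add]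
      exact Finset.sum_congr rfl fun b _ => by rw [if_pos (Ne.symm b.2), hsymm i b.1]
    have hrow_a : ∀ a : {k : Fin p // k ≠ i}, ∑ k, (if a.1 ≠ k then |Sgm a.1 k| else 0)
        = |Sgm a.1 i| + ∑ b : {k : Fin p // k ≠ i}, (if a ≠ b then |Sgmm a b| else 0) := by
      intro a
      rw [aux_sum_split i (f := fun k => if a.1 ≠ k then |Sgm a.1 k| else 0)]
      rw [if_pos a.2]
      congr 1
      refine Finset.sum_congr rfl fun b _ => ?_
      by_cases h : a = b
      · rw [if_neg (by simp [h]), if_neg (by simp [h])]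
      · rw [if_pos (fun hh => h (Subtype.ext hh)), if_pos h, hSgmm]
        rfl
    rw [aux_sum_split i (f := fun j => ∑ k, if j ≠ k then |Sgm j k| else 0), hrow_i, hbd]
    rw [Finset.sum_congr rfl fun a _ => hrow_a a, Finset.sum_add_distrib, hbd]
    ring
  -- assembling
  have hnn : (n : ℝ) ≠ 0 := by positivity
  have hlog : Real.log Sgm.det = Real.log Sgmm.det + Real.log τi := by
    rw [hdet, Real.log_mul hAdet.ne' hτpos.ne']
  have hfin : (1 / (n : ℝ)) * (Sgm⁻¹ * (Yᵀ * Y)).trace + κ * ∑ j, Sgm⁻¹ j j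
      = (1 / (n : ℝ)) * (Sgmm⁻¹ * (Yκmᵀ * Yκm)).trace
        + (1 / ((n : ℝ) * τi)) * ∑ r, (Yκ r i - (Zbd *ᵥ σbd) r) ^ 2 := by
    have h1 : (1 / (n : ℝ)) * ((Sgm⁻¹ * (Yᵀ * Y)).trace + ((n : ℝ) * κ) * ∑ j, Sgm⁻¹ j j)
        = (1 / (n : ℝ)) * (Sgm⁻¹ * (Yκᵀ * Yκ)).trace := by rw [htr1]
    rw [htr2] at h1
    have h2 : ∀ X : ℝ, (1 / (n : ℝ)) * (((n : ℝ) * κ) * X) = κ * X := by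
      intro X; field_simp
    have h3 : (1 / (n : ℝ)) * ((1/τi) * ∑ r, (Yκ r i - (Zbd *ᵥ σbd) r) ^ 2)
        = (1 / ((n : ℝ) * τi)) * ∑ r, (Yκ r i - (Zbd *ᵥ σbd) r) ^ 2 := by
      rw [one_div, one_div, one_div, mul_inv]; ring
    rw [mul_add, h2 _] at h1
    rw [mul_add, h3] at h1
    linarith [h1]
  rw [hlog, hpen]
  linear_combination (-1 : ℝ) * hfin
end

section
/- Let p ≥ 2, let S = (s_{jk}) be a symmetric p×p real matrix with s_{jj} > 0 for every j, and let E be a nonempty set of unordered pairs of distinct indices in {1,…,p} such that s_{ij} ≠ 0 for at least one {i,j} ∈ E. Define λ_MAX(κ) = max_{{i,j}∈E} |s_{ij}|/((s_{ii}+κ)(s_{jj}+κ)), g_{ij}(λ) = |s_{ij}|/λ − s_{ii}s_{jj}, and κ_MAX(λ) = max over {i,j} ∈ E with g_{ij}(λ) ≥ 0 of √((s_{ii}+s_{jj})²/4 + g_{ij}(λ)) − (s_{ii}+s_{jj})/2. Then for every λ with 0 < λ ≤ λ_MAX(0) and every κ ≥ 0, one has λ ≤ λ_MAX(κ) if and only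 if κ ≤ κ_MAX(λ). -/
open Matrix Finset

/-- Theorem 2 (main equivalence): for `0 < λ ≤ λ_MAX(0)` and `κ ≥ 0`,
`λ ≤ λ_MAX(κ)` if and only if `κ ≤ κ_MAX(λ)`, where
`κ_MAX(λ) = max_{{i,j}∈E, g_ij(λ)≥0} √((s_ii+s_jj)²/4 + g_ij(λ)) − (s_ii+s_jj)/2`
and `g_ij(λ) = |s_ij|/λ − s_ii·s_jj`. The maximum in `κ_MAX` is expressed as
the supremum of the (finite, nonempty) set of per-edge values. -/
theorem stmt10 (p : ℕ) (hp : 2 ≤ p)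
    (S : Matrix (Fin p) (Fin p) ℝ) (hsymm : S.IsSymm) (hdiag : ∀ j, 0 < S j j)
    (E : Finset (Fin p × Fin p)) (hE : E.Nonempty)
    (hdist : ∀ e ∈ E, e.1 ≠ e.2)
    (hnz : ∃ e ∈ E, S e.1 e.2 ≠ 0)
    (lamMAX : ℝ → ℝ)
    (hlamMAX : ∀ κ, lamMAX κ =
      E.sup' hE fun e => |S e.1 e.2| / ((S e.1 e.1 + κ) * (S e.2 e.2 + κ)))
    (g : Fin p × Fin p → ℝ → ℝ)
    (hg : ∀ e lam, g e lam = |S e.1 e.2| / lam - S e.1 e.1 * S e.2 e.2)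
    (κMAX : ℝ → ℝ)
    (hκMAX : ∀ lam, κMAX lam = sSup {x : ℝ | ∃ e ∈ E, 0 ≤ g e lam ∧
      x = Real.sqrt ((S e.1 e.1 + S e.2 e.2) ^ 2 / 4 + g e lam)
        - (S e.1 e.1 + S e.2 e.2) / 2}) :
    ∀ lam κ : ℝ, 0 < lam → lam ≤ lamMAX 0 → 0 ≤ κ →
      (lam ≤ lamMAX κ ↔ κ ≤ κMAX lam) := by

  intro lam κ hlam hlam0 hκ
  have key : ∀ e ∈ E, ∀ k : ℝ, 0 ≤ k →
      (lam ≤ |S e.1 e.2| / ((S e.1 e.1 + k) * (S e.2 e.2 + k)) ↔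
       (0 ≤ g e lam ∧ k ≤ Real.sqrt ((S e.1 e.1 + S e.2 e.2) ^ 2 / 4 + g e lam)
        - (S e.1 e.1 + S e.2 e.2) / 2)) := by
    intro e he k hk
    have ha := hdiag e.1
    have hb := hdiag e.2
    have hpos : 0 < (S e.1 e.1 + k) * (S e.2 e.2 + k) := by positivity
    rw [le_div_iff₀ hpos, hg]
    constructor
    · intro h
      have h2 : (S e.1 e.1 + k) * (S e.2 e.2 + k) ≤ |S e.1 e.2| / lam := by
        rw [le_div_iff₀ hlam]; nlinarith
      have hgnn : 0 ≤ |S e.1 e.2| / lam - S e.1 e.1 * S e.2 e.2 := by nlinarith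
      refine ⟨hgnn, ?_⟩
      have hsq : (k + (S e.1 e.1 + S e.2 e.2) / 2) ^ 2 ≤
          (S e.1 e.1 + S e.2 e.2) ^ 2 / 4 +
            (|S e.1 e.2| / lam - S e.1 e.1 * S e.2 e.2) := by nlinarith
      have hle : k + (S e.1 e.1 + S e.2 e.2) / 2 ≤
          Real.sqrt ((S e.1 e.1 + S e.2 e.2) ^ 2 / 4 +
            (|S e.1 e.2| / lam - S e.1 e.1 * S e.2 e.2)) := by
        rw [show k + (S e.1 e.1 + S e.2 e.2) / 2
            = Real.sqrt ((k + (S e.1 e.1 + S e.2 e.2) / 2) ^ 2) from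
          (Real.sqrt_sq (by positivity)).symm]
        exact Real.sqrt_le_sqrt hsq
      linarith
    · rintro ⟨hgnn, hle⟩
      have harg : 0 ≤ (S e.1 e.1 + S e.2 e.2) ^ 2 / 4 +
          (|S e.1 e.2| / lam - S e.1 e.1 * S e.2 e.2) := by positivity
      have h1 : k + (S e.1 e.1 + S e.2 e.2) / 2 ≤
          Real.sqrt ((S e.1 e.1 + S e.2 e.2) ^ 2 / 4 +
            (|S e.1 e.2| / lam - S e.1 e.1 * S e.2 e.2)) := by linarith
      have h2 : (k + (S e.1 e.1 + S e.2 e.2) / 2) ^ 2 ≤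
          (S e.1 e.1 + S e.2 e.2) ^ 2 / 4 +
            (|S e.1 e.2| / lam - S e.1 e.1 * S e.2 e.2) := by
        have := Real.sq_sqrt harg
        nlinarith [Real.sqrt_nonneg ((S e.1 e.1 + S e.2 e.2) ^ 2 / 4 +
            (|S e.1 e.2| / lam - S e.1 e.1 * S e.2 e.2)), h1,
          pow_le_pow_left₀ (by positivity : (0:ℝ) ≤ k + (S e.1 e.1 + S e.2 e.2) / 2) h1 2]
      have h3 : (S e.1 e.1 + k) * (S e.2 e.2 + k) ≤ |S e.1 e.2| / lam := by nlinarith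
      rw [le_div_iff₀ hlam] at h3
      nlinarith [h3]
  have main : ∀ k : ℝ, 0 ≤ k → (lam ≤ lamMAX k ↔ ∃ e ∈ E, 0 ≤ g e lam ∧
      k ≤ Real.sqrt ((S e.1 e.1 + S e.2 e.2) ^ 2 / 4 + g e lam)
        - (S e.1 e.1 + S e.2 e.2) / 2) := by
    intro k hk
    rw [hlamMAX, Finset.le_sup'_iff]
    constructor
    · rintro ⟨e, he, h⟩
      exact ⟨e, he, (key e he k hk).mp h⟩
    · rintro ⟨e, he, h⟩
      exact ⟨e, he, (key e he k hk).mpr h⟩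
  set T : Set ℝ := {x : ℝ | ∃ e ∈ E, 0 ≤ g e lam ∧
      x = Real.sqrt ((S e.1 e.1 + S e.2 e.2) ^ 2 / 4 + g e lam)
        - (S e.1 e.1 + S e.2 e.2) / 2} with hT
  have hfin : T.Finite := by
    apply Set.Finite.subset (Set.Finite.image
      (fun e => Real.sqrt ((S e.1 e.1 + S e.2 e.2) ^ 2 / 4 + g e lam)
        - (S e.1 e.1 + S e.2 e.2) / 2) E.finite_toSet)
    rintro x ⟨e, he, _, rfl⟩
    exact ⟨e, he, rfl⟩
  have hne : T.Nonempty := by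
    obtain ⟨e, he, hge, -⟩ := (main 0 le_rfl).mp hlam0
    exact ⟨_, e, he, hge, rfl⟩
  rw [hκMAX, ← hT, main κ hκ]
  constructor
  · rintro ⟨e, he, hge, hle⟩
    exact le_trans hle (le_csSup hfin.bddAbove ⟨e, he, hge, rfl⟩)
  · intro h
    obtain ⟨e, he, hge, hx⟩ := hne.csSup_mem hfin
    exact ⟨e, he, hge, by rw [← hx]; exact h⟩
end

section
/- Let p ≥ 2, let S = (s_{jk}) be a symmetric positive semidefinite p×p real matrix, let E be a set of unordered pairs of distinct indices in {1,…,p}, let κ ≥ 0 with s_{jj} + κ > 0 for every j, and let λ ≥ λ_MAX(κ), where λ_MAX(κ) = max_{{i,j}∈E} |s_{ij}|/((s_{ii}+κ)(s_{jj}+κ)) if E ≠ ∅ and λ_MAX(κ) = 0 otherwise. Set D = diag(S) + κ·I_p and f(Σ) = −log det Σ − tr(Σ⁻¹·(S + κ·I_p)) − λ·∑_{j≠k}|Σ_{jk}|. Then for every symmetric p×p matrix A with A_{jk} = 0 whenever j ≠ k and {j,k} ∉ E, the one-sided directional derivative lim_{t→0⁺} (f(D + tA) − f(D))/t exists, equals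 ∑_{j≠k} A_{jk}·s_{jk}/((s_{jj}+κ)(s_{kk}+κ)) − λ·∑_{j≠k}|A_{jk}|, and is less than or equal to 0. In particular D is a directionally stationary point of the ridge-regularized covglasso objective over the matrices adapted to the graph with edge set E. -/
open Matrix Polynomial

attribute [local instance] Matrix.linftyOpNormedRing Matrix.linftyOpNormedAlgebra

private lemma aux_log_deriv {p : ℕ} (Dm A : Matrix (Fin p) (Fin p) ℝ)
    (hu : IsUnit Dm.det) (hpos : 0 < Dm.det) :
    HasDerivAt (fun t : ℝ => Real.log ((Dm + t • A).det)) ((Dm⁻¹ * A).trace) 0 := by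
  classical
  set M := Dm⁻¹ * A with hM
  set P : ℝ[X] := (Matrix.det (1 + (X : ℝ[X]) • M.map C)).divX.divX with hP
  have hdetfun : ∀ t : ℝ, (Dm + t • A).det
      = Dm.det * (1 + M.trace * t + P.eval t * t ^ 2) := by
    intro t
    rw [← Matrix.det_one_add_smul t M, ← Matrix.det_mul]
    congr 1
    rw [Matrix.mul_add, Matrix.mul_one, Matrix.mul_smul, hM, ← Matrix.mul_assoc,
      Matrix.mul_nonsing_inv _ hu, Matrix.one_mul]
  have hq : HasDerivAt (fun t : ℝ => 1 + M.trace * t + P.eval t * t ^ 2) M.trace 0 := by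
    have h1 : HasDerivAt (fun t : ℝ => 1 + M.trace * t) M.trace 0 := by
      simpa using ((hasDerivAt_id (0:ℝ)).const_mul M.trace).const_add 1
    have h2 : HasDerivAt (fun t : ℝ => P.eval t * t ^ 2) 0 0 := by
      exact ((P.hasDerivAt 0).mul (hasDerivAt_pow 2 0)).congr_deriv (by simp)
    exact (h1.add h2).congr_deriv (by simp)
  have hlog : HasDerivAt
      (fun t : ℝ => Real.log (Dm.det * (1 + M.trace * t + P.eval t * t ^ 2))) M.trace 0 := by
    have hne : Dm.det * (1 + M.trace * 0 + P.eval 0 * 0 ^ 2) ≠ 0 := by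
      simpa using hpos.ne'
    have := ((hq.const_mul Dm.det).log hne)
    convert this using 1
    field_simp
    simp
  exact hlog.congr_of_eventuallyEq
    (Filter.Eventually.of_forall fun t => by simp only [hdetfun t])

private lemma aux_inv_deriv {p : ℕ} (Dm A : Matrix (Fin p) (Fin p) ℝ) (hu : IsUnit Dm) :
    HasDerivAt (fun t : ℝ => Ring.inverse (Dm + t • A)) (-(Dm⁻¹ * A * Dm⁻¹)) 0 := by
  letI : CompleteSpace (Matrix (Fin p) (Fin p) ℝ) := FiniteDimensional.complete ℝ _
  have hψ : HasDerivAt (fun t : ℝ => Dm + t • A) A 0 := by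
    exact (((hasDerivAt_id (0:ℝ)).smul_const A).const_add Dm).congr_deriv (by simp)
  have h0 : Dm + (0:ℝ) • A = ↑hu.unit := by simp
  have hfd := hasFDerivAt_ringInverse (𝕜 := ℝ) hu.unit
  rw [← h0] at hfd
  have := hfd.comp_hasDerivAt 0 hψ
  simp [ContinuousLinearMap.mulLeftRight_apply, Matrix.coe_units_inv, hu.unit_spec] at this
  exact this

private lemma aux_trace_deriv {p : ℕ} (Dm A Sk : Matrix (Fin p) (Fin p) ℝ) (hu : IsUnit Dm) :
    HasDerivAt (fun t : ℝ => (((Dm + t • A)⁻¹) * Sk).trace)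
      (-((Dm⁻¹ * A * Dm⁻¹ * Sk).trace)) 0 := by
  classical
  let L2 : Matrix (Fin p) (Fin p) ℝ →L[ℝ] ℝ :=
    LinearMap.toContinuousLinearMap
      ((Matrix.traceLinearMap (Fin p) ℝ ℝ).comp (LinearMap.mulRight ℝ Sk))
  have hinv := aux_inv_deriv Dm A hu
  have := L2.hasFDerivAt.comp_hasDerivAt 0 hinv
  have heq : (fun t : ℝ => L2 (Ring.inverse (Dm + t • A)))
      = fun t : ℝ => (((Dm + t • A)⁻¹) * Sk).trace := by
    funext t
    simp [L2, Matrix.nonsing_inv_eq_ringInverse]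
  rw [show (⇑L2 ∘ fun t : ℝ => Ring.inverse (Dm + t • A)) = fun t : ℝ => L2 (Ring.inverse (Dm + t • A)) from rfl, heq] at this
  exact this.congr_deriv (by
    show ((-(Dm⁻¹ * A * Dm⁻¹)) * Sk).trace = _
    simp [Matrix.mul_assoc])

/-- Theorem 1 (directional stationarity of the diagonal point): for
`λ ≥ λ_MAX(κ)` (i.e. `λ ≥ 0` and `λ` bounds each edge value
`|s_ij|/((s_ii+κ)(s_jj+κ))`), along every feasible symmetric direction `A`
(adapted to the graph `G`), the one-sided directional derivative of the
ridge-regularized covglasso objective `f` at `D = diag(S) + κ·I` exists,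
equals `∑_{j≠k} A_{jk} s_{jk}/((s_jj+κ)(s_kk+κ)) − λ·∑_{j≠k}|A_{jk}|`, and is
at most `0`. -/
theorem stmt16 (p : ℕ) (hp : 2 ≤ p)
    (S : Matrix (Fin p) (Fin p) ℝ) (hS : S.PosSemidef)
    (G : SimpleGraph (Fin p))
    (κ : ℝ) (hκ : 0 ≤ κ) (hdiag : ∀ j, 0 < S j j + κ)
    (lam : ℝ) (hlam0 : 0 ≤ lam)
    (hlam : ∀ i j, G.Adj i j →
      |S i j| / ((S i i + κ) * (S j j + κ)) ≤ lam)
    (D : Matrix (Fin p) (Fin p) ℝ)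
    (hD : D = Matrix.diagonal fun j => S j j + κ)
    (f : Matrix (Fin p) (Fin p) ℝ → ℝ)
    (hf : ∀ M, f M = -Real.log M.det
      - (M⁻¹ * (S + κ • (1 : Matrix (Fin p) (Fin p) ℝ))).trace
      - lam * ∑ j, ∑ k, if j ≠ k then |M j k| else 0)
    (A : Matrix (Fin p) (Fin p) ℝ) (hA : A.IsSymm)
    (hAadapt : ∀ j k, j ≠ k → ¬ G.Adj j k → A j k = 0) :
    Filter.Tendsto (fun t : ℝ => (f (D + t • A) - f D) / t)
      (nhdsWithin 0 (Set.Ioi 0))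
      (nhds ((∑ j, ∑ k,
          if j ≠ k then A j k * S j k / ((S j j + κ) * (S k k + κ)) else 0)
        - lam * ∑ j, ∑ k, if j ≠ k then |A j k| else 0)) ∧
    (∑ j, ∑ k,
        if j ≠ k then A j k * S j k / ((S j j + κ) * (S k k + κ)) else 0)
      - lam * ∑ j, ∑ k, (if j ≠ k then |A j k| else 0) ≤ 0 := by
  classical
  subst hD
  set T : ℝ := ∑ j, ∑ k,
      if j ≠ k then A j k * S j k / ((S j j + κ) * (S k k + κ)) else 0 with hT
  set Sab : ℝ := ∑ j, ∑ k, if j ≠ k then |A j k| else 0 with hSab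
  set Sk : Matrix (Fin p) (Fin p) ℝ := S + κ • 1 with hSk
  set Dm : Matrix (Fin p) (Fin p) ℝ := Matrix.diagonal fun j => S j j + κ with hDm
  have hsymm : ∀ j k, S k j = S j k := fun j k => (by simpa using hS.1.apply k j : S j k = S k j).symm
  -- the inequality part
  have hineq : T - lam * Sab ≤ 0 := by
    have key : ∀ j k : Fin p,
        (if j ≠ k then A j k * S j k / ((S j j + κ) * (S k k + κ)) else 0)
          ≤ lam * (if j ≠ k then |A j k| else 0) := by
      intro j k
      by_cases h : j ≠ k
      · rw [if_pos h, if_pos h]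
        by_cases hadj : G.Adj j k
        · have hd : 0 < (S j j + κ) * (S k k + κ) := mul_pos (hdiag j) (hdiag k)
          calc A j k * S j k / ((S j j + κ) * (S k k + κ))
              ≤ |A j k * S j k / ((S j j + κ) * (S k k + κ))| := le_abs_self _
            _ = |A j k| * (|S j k| / ((S j j + κ) * (S k k + κ))) := by
                rw [abs_div, abs_mul, abs_of_pos hd, mul_div_assoc]
            _ ≤ |A j k| * lam :=
                mul_le_mul_of_nonneg_left (hlam j k hadj) (abs_nonneg _)
            _ = lam * |A j k| := mul_comm _ _
        · simp [hAadapt j k h hadj]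
      · simp [h]
    have : T ≤ lam * Sab := by
      rw [hT, hSab, Finset.mul_sum]
      refine Finset.sum_le_sum fun j _ => ?_
      rw [Finset.mul_sum]
      exact Finset.sum_le_sum fun k _ => key j k
    linarith
  -- determinant facts
  have hdet : Dm.det = ∏ j, (S j j + κ) := by rw [hDm, Matrix.det_diagonal]
  have hdetpos : 0 < Dm.det := by
    rw [hdet]; exact Finset.prod_pos fun j _ => hdiag j
  have hudet : IsUnit Dm.det := isUnit_iff_ne_zero.mpr hdetpos.ne'
  have hu : IsUnit Dm := (Matrix.isUnit_iff_isUnit_det Dm).mpr hudet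
  have hDinv : Dm⁻¹ = Matrix.diagonal fun j => (S j j + κ)⁻¹ := by
    refine Matrix.inv_eq_right_inv ?_
    rw [hDm, Matrix.diagonal_mul_diagonal]
    have : (fun j => (S j j + κ) * (S j j + κ)⁻¹) = fun _ : Fin p => (1:ℝ) :=
      funext fun j => mul_inv_cancel₀ (hdiag j).ne'
    rw [this, Matrix.diagonal_one]
  -- the function g
  set g : ℝ → ℝ := fun t => -Real.log ((Dm + t • A).det) - (((Dm + t • A)⁻¹) * Sk).trace
    with hgdef
  have hg' : HasDerivAt g (-((Dm⁻¹ * A).trace) + (Dm⁻¹ * A * Dm⁻¹ * Sk).trace) 0 := by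
    have h1 := aux_log_deriv Dm A hudet hdetpos
    have h2 := aux_trace_deriv Dm A Sk hu
    have h3 := (h1.neg).sub h2
    exact h3.congr_deriv (by ring)
  -- value of the derivative
  have hval : -((Dm⁻¹ * A).trace) + (Dm⁻¹ * A * Dm⁻¹ * Sk).trace = T := by
    have htr1 : (Dm⁻¹ * A).trace = ∑ j, (S j j + κ)⁻¹ * A j j := by
      rw [hDinv]
      simp [Matrix.trace, Matrix.diag, Matrix.mul_apply, Matrix.diagonal_apply, ite_mul,
        Finset.sum_ite_eq]
    have hB : ∀ j k, (Dm⁻¹ * A * Dm⁻¹) j k = (S j j + κ)⁻¹ * A j k * (S k k + κ)⁻¹ := by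
      intro j k
      rw [hDinv, Matrix.mul_diagonal, Matrix.diagonal_mul]
    have htr2 : (Dm⁻¹ * A * Dm⁻¹ * Sk).trace
        = ∑ j, ∑ k, (S j j + κ)⁻¹ * A j k * (S k k + κ)⁻¹ * Sk k j := by
      simp [Matrix.trace, Matrix.diag, Matrix.mul_apply, hB]
    have hkey : ∀ j : Fin p, ∑ k, (S j j + κ)⁻¹ * A j k * (S k k + κ)⁻¹ * Sk k j
        = (∑ k, if j ≠ k then A j k * S j k / ((S j j + κ) * (S k k + κ)) else 0)
          + (S j j + κ)⁻¹ * A j j := by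
      intro j
      have hterm : ∀ k, (S j j + κ)⁻¹ * A j k * (S k k + κ)⁻¹ * Sk k j
          = (if j ≠ k then A j k * S j k / ((S j j + κ) * (S k k + κ)) else 0)
            + (if k = j then (S j j + κ)⁻¹ * A j j else 0) := by
        intro k
        by_cases hkj : k = j
        · subst hkj
          have hSkk : Sk k k = S k k + κ := by
            simp [hSk, Matrix.add_apply, Matrix.smul_apply, Matrix.one_apply]
          simp only [hSkk, ne_eq, not_true_eq_false, if_false, if_true, zero_add,
            ite_true]
          rw [mul_assoc, inv_mul_cancel₀ (hdiag k).ne', mul_one]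
        · have hjk : j ≠ k := Ne.symm hkj
          have hSkj : Sk k j = S j k := by
            simp [hSk, Matrix.add_apply, Matrix.smul_apply, Matrix.one_apply, hkj, hsymm j k]
          rw [hSkj]
          simp only [hjk, hkj, if_true, if_false, add_zero, ne_eq, not_false_eq_true]
          field_simp <;> ring
      rw [Finset.sum_congr rfl fun k _ => hterm k, Finset.sum_add_distrib]
      congr 1
      simp
    rw [htr1, htr2, Finset.sum_congr rfl fun j _ => hkey j, Finset.sum_add_distrib, hT]
    ring
  have hg : HasDerivAt g T 0 := hval ▸ hg'
  -- slope convergence from the right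
  have hslope : Filter.Tendsto (fun t : ℝ => (g t - g 0) / t)
      (nhdsWithin 0 (Set.Ioi 0)) (nhds T) := by
    have h := hasDerivAt_iff_tendsto_slope.mp hg
    have h2 := h.mono_left (nhdsWithin_mono 0
      (fun x (hx : x ∈ Set.Ioi (0:ℝ)) => Set.mem_compl_singleton_iff.mpr (ne_of_gt hx)))
    refine h2.congr fun t => ?_
    simp [slope_def_field]
  -- f along the path
  have hpen : ∀ t : ℝ, 0 < t → f (Dm + t • A) = g t - lam * (t * Sab) := by
    intro t ht
    rw [hf, hgdef]
    have hpenal : (∑ j, ∑ k, if j ≠ k then |(Dm + t • A) j k| else 0) = t * Sab := by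
      rw [hSab, Finset.mul_sum]
      refine Finset.sum_congr rfl fun j _ => ?_
      rw [Finset.mul_sum]
      refine Finset.sum_congr rfl fun k _ => ?_
      by_cases h : j = k
      · simp [h]
      · have : (Dm + t • A) j k = t * A j k := by
          simp [hDm, Matrix.add_apply, Matrix.smul_apply, Matrix.diagonal_apply_ne _ h]
        simp [h, this, abs_mul, abs_of_pos ht]
    rw [hpenal]
  have hf0 : f Dm = g 0 := by
    rw [hf, hgdef]
    have hpen0 : (∑ j, ∑ k, if j ≠ k then |Dm j k| else 0) = 0 := by
      refine Finset.sum_eq_zero fun j _ => Finset.sum_eq_zero fun k _ => ?_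
      by_cases h : j = k
      · simp [h]
      · simp [h, hDm, Matrix.diagonal_apply_ne _ h]
    rw [hpen0]
    simp
  refine ⟨?_, hineq⟩
  have final := hslope.sub_const (lam * Sab)
  refine final.congr' ?_
  filter_upwards [self_mem_nhdsWithin] with t ht
  have ht' : (0:ℝ) < t := ht
  rw [hpen t ht', hf0]
  field_simp
  ring
end
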